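/- The Dirichlet log-likelihood, as a function of the parameter α ∈ (0,∞)^d, is concave: for fixed data points x^{(1)},…,x^{(n)} in the interior of the simplex, the function L(α) = ∑_{k=1}^{n} [ log Γ(∑_i α_i) − ∑_i log Γ(α_i) + ∑_i (α_i − 1) log x^{(k)}_i ] is concave on (0,∞)^d. -/

import Mathlib

/-! The Beta function `B(s, t) = Γ(s) Γ(t) / Γ(s + t)` is the integral over `(0, 1)` of
`x ^ (s - 1) * (1 - x) ^ (t - 1)`, an integrand that is log-affine in `(s, t)`; Hölder's inequality
therefore makes `log B` jointly convex. Splitting off one coordinate at a time,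
`log Γ(∑ αᵢ) - ∑ log Γ(αᵢ)` is a sum of the concave functions `-log B(α_j, ∑_{i ∈ s} αᵢ)`, and the
data term of the log-likelihood is affine in `α`. -/

open Real MeasureTheory Set ProbabilityTheory

theorem lintegral_rpow_mul_one_sub_rpow_eq_beta {s t : ℝ} (hs : 0 < s) (ht : 0 < t) :
    ∫⁻ x in Ioo (0 : ℝ) 1, ENNReal.ofReal (x ^ (s - 1) * (1 - x) ^ (t - 1))
      = ENNReal.ofReal (beta s t) := by
  have hB := beta_pos hs ht
  have h := lintegral_betaPDF_eq_one hs ht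
  simp_rw [lintegral_betaPDF, mul_assoc, ENNReal.ofReal_mul (one_div_nonneg.mpr hB.le)] at h
  rwa [lintegral_const_mul _ (by fun_prop), ENNReal.ofReal_div_of_pos hB, ENNReal.ofReal_one,
    one_div, ← ENNReal.div_eq_inv_mul,
    ENNReal.div_eq_one_iff (by simpa) ENNReal.ofReal_ne_top] at h

theorem beta_mul_add_mul_le_rpow_beta_mul_rpow_beta {s₁ t₁ s₂ t₂ a b : ℝ} (hs₁ : 0 < s₁)
    (ht₁ : 0 < t₁) (hs₂ : 0 < s₂) (ht₂ : 0 < t₂) (ha : 0 < a) (hb : 0 < b) (hab : a + b = 1) :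
    beta (a * s₁ + b * s₂) (a * t₁ + b * t₂) ≤ beta s₁ t₁ ^ a * beta s₂ t₂ ^ b := by
  have holder := ENNReal.lintegral_mul_norm_pow_le (μ := volume.restrict (Ioo (0 : ℝ) 1))
    (f := fun x => ENNReal.ofReal (x ^ (s₁ - 1) * (1 - x) ^ (t₁ - 1)))
    (g := fun x => ENNReal.ofReal (x ^ (s₂ - 1) * (1 - x) ^ (t₂ - 1)))
    (by fun_prop) (by fun_prop) ha.le hb.le hab
  have interpolate : ∀ x ∈ Ioo (0 : ℝ) 1,
      ENNReal.ofReal (x ^ (s₁ - 1) * (1 - x) ^ (t₁ - 1)) ^ a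
        * ENNReal.ofReal (x ^ (s₂ - 1) * (1 - x) ^ (t₂ - 1)) ^ b
      = ENNReal.ofReal (x ^ (a * s₁ + b * s₂ - 1) * (1 - x) ^ (a * t₁ + b * t₂ - 1)) := by
    rintro x ⟨hx₀, hx₁⟩
    have hx : 0 < 1 - x := by linarith
    rw [ENNReal.ofReal_rpow_of_nonneg (by positivity) ha.le,
      ENNReal.ofReal_rpow_of_nonneg (by positivity) hb.le, ← ENNReal.ofReal_mul (by positivity),
      mul_rpow (by positivity) (by positivity), mul_rpow (by positivity) (by positivity),
      ← rpow_mul hx₀.le, ← rpow_mul hx.le, ← rpow_mul hx₀.le, ← rpow_mul hx.le,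
      mul_mul_mul_comm, ← rpow_add hx₀, ← rpow_add hx]
    congr 3 <;> linear_combination -hab
  have hs : 0 < a * s₁ + b * s₂ := by positivity
  have ht : 0 < a * t₁ + b * t₂ := by positivity
  have hB₁ := beta_pos hs₁ ht₁
  have hB₂ := beta_pos hs₂ ht₂
  rw [setLIntegral_congr_fun measurableSet_Ioo interpolate,
    lintegral_rpow_mul_one_sub_rpow_eq_beta hs₁ ht₁,
    lintegral_rpow_mul_one_sub_rpow_eq_beta hs₂ ht₂, lintegral_rpow_mul_one_sub_rpow_eq_beta hs ht,
    ENNReal.ofReal_rpow_of_nonneg hB₁.le ha.le, ENNReal.ofReal_rpow_of_nonneg hB₂.le hb.le,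
    ← ENNReal.ofReal_mul (by positivity)] at holder
  exact (ENNReal.ofReal_le_ofReal_iff (by positivity)).mp holder

theorem log_beta {s t : ℝ} (hs : 0 < s) (ht : 0 < t) :
    log (beta s t) = log (Gamma s) + log (Gamma t) - log (Gamma (s + t)) := by
  rw [beta, log_div (by positivity) (Gamma_pos_of_pos (by positivity)).ne',
    log_mul (Gamma_pos_of_pos hs).ne' (Gamma_pos_of_pos ht).ne']

theorem convexOn_log_beta : ConvexOn ℝ (Ioi 0 ×ˢ Ioi 0) fun p : ℝ × ℝ => log (beta p.1 p.2) := by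
  refine convexOn_iff_forall_pos.mpr
    ⟨(convex_Ioi 0).prod (convex_Ioi 0), fun p hp q hq a b ha hb hab => ?_⟩
  obtain ⟨hp₁, hp₂⟩ : 0 < p.1 ∧ 0 < p.2 := hp
  obtain ⟨hq₁, hq₂⟩ : 0 < q.1 ∧ 0 < q.2 := hq
  have hBp := beta_pos hp₁ hp₂
  have hBq := beta_pos hq₁ hq₂
  simp only [Prod.fst_add, Prod.snd_add, Prod.smul_fst, Prod.smul_snd, smul_eq_mul]
  rw [← log_rpow hBp, ← log_rpow hBq, ← log_mul (by positivity) (by positivity)]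
  exact log_le_log (beta_pos (by positivity) (by positivity))
    (beta_mul_add_mul_le_rpow_beta_mul_rpow_beta hp₁ hp₂ hq₁ hq₂ ha hb hab)

theorem convex_setOf_forall_pos {ι : Type*} : Convex ℝ {α : ι → ℝ | ∀ i, 0 < α i} := by
  refine convex_iff_forall_pos.mpr fun α hα β hβ a b ha hb _ i => ?_
  simpa using add_pos (mul_pos ha (hα i)) (mul_pos hb (hβ i))

theorem concaveOn_logGamma_sum_sub_sum_logGamma {ι : Type*} (s : Finset ι) :
    ConcaveOn ℝ {α : ι → ℝ | ∀ i, 0 < α i}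
      fun α => log (Gamma (∑ i ∈ s, α i)) - ∑ i ∈ s, log (Gamma (α i)) := by
  classical
  induction s using Finset.induction_on with
  | empty => simpa using concaveOn_const (0 : ℝ) convex_setOf_forall_pos
  | insert j s hj ih =>
    rcases s.eq_empty_or_nonempty with rfl | hs
    · simpa using concaveOn_const (0 : ℝ) convex_setOf_forall_pos
    have hsum {α : ι → ℝ} (hα : ∀ i, 0 < α i) : 0 < ∑ i ∈ s, α i :=
      Finset.sum_pos (fun i _ => hα i) hs
    let split : (ι → ℝ) →ₗ[ℝ] ℝ × ℝ :=
      (LinearMap.proj (R := ℝ) (φ := fun _ : ι => ℝ) j).prod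
        (∑ i ∈ s, LinearMap.proj (R := ℝ) (φ := fun _ : ι => ℝ) i)
    have hsplit : ConcaveOn ℝ {α : ι → ℝ | ∀ i, 0 < α i}
        fun α => log (Gamma (α j + ∑ i ∈ s, α i)) - log (Gamma (α j))
          - log (Gamma (∑ i ∈ s, α i)) := by
      refine ((convexOn_log_beta.neg.comp_linearMap split).subset (fun α hα => ?_)
        convex_setOf_forall_pos).congr fun α hα => ?_
      · exact ⟨hα j, by simpa [split] using hsum hα⟩
      · simp only [Function.comp_apply, LinearMap.prod_apply, LinearMap.coe_proj,
          LinearMap.coe_sum, Function.prod_apply, Function.eval, Finset.sum_apply, Pi.neg_apply,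
          log_beta (hα j) (hsum hα), split]
        ring
    refine (hsplit.add ih).congr fun α _ => ?_
    simp only [Finset.sum_insert hj, Pi.add_apply]
    ring

theorem concaveOn_sum {𝕜 E β ι : Type*} [Semiring 𝕜] [PartialOrder 𝕜] [AddCommMonoid E]
    [AddCommMonoid β] [PartialOrder β] [IsOrderedAddMonoid β] [SMul 𝕜 E] [Module 𝕜 β]
    {s : Set E} (hs : Convex 𝕜 s) (t : Finset ι) {f : ι → E → β}
    (hf : ∀ k ∈ t, ConcaveOn 𝕜 s (f k)) : ConcaveOn 𝕜 s fun x => ∑ k ∈ t, f k x := by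
  simpa only [← Finset.sum_apply] using
    Finset.sum_induction f (ConcaveOn 𝕜 s) (fun _ _ => ConcaveOn.add) (concaveOn_const (0 : β) hs) hf

theorem concaveOn_sum_sub_one_mul {ι : Type*} [Fintype ι] (c : ι → ℝ) {s : Set (ι → ℝ)}
    (hs : Convex ℝ s) : ConcaveOn ℝ s fun α => ∑ i, (α i - 1) * c i := by
  refine ⟨hs, fun α _ β _ a b _ _ hab => le_of_eq ?_⟩
  simp only [smul_eq_mul, Pi.add_apply, Pi.smul_apply, Finset.mul_sum, ← Finset.sum_add_distrib]
  exact Finset.sum_congr rfl fun i _ => by linear_combination (-c i) * hab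

theorem stmt_9_general {d n : ℕ} (x : Fin n → Fin d → ℝ) :
    ConcaveOn ℝ {α : Fin d → ℝ | ∀ i, 0 < α i}
      (fun α => ∑ k : Fin n,
        (Real.log (Real.Gamma (∑ i, α i)) - (∑ i, Real.log (Real.Gamma (α i)))
          + ∑ i, (α i - 1) * Real.log (x k i))) :=
  concaveOn_sum convex_setOf_forall_pos _ fun _ _ =>
    (concaveOn_logGamma_sum_sub_sum_logGamma _).add
      (concaveOn_sum_sub_one_mul _ convex_setOf_forall_pos)

/-- The Dirichlet log-likelihood, as a function of `α ∈ (0,∞)^d`, is concave: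
for data `x⁽¹⁾,…,x⁽ⁿ⁾` in the interior of the simplex, the map
`α ↦ ∑ₖ [log Γ(∑ αᵢ) − ∑ log Γ(αᵢ) + ∑ (αᵢ−1) log xᵢ⁽ᵏ⁾]` is concave on
`{α | ∀ i, 0 < α i}`. -/
theorem stmt_9 {d n : ℕ} (x : Fin n → Fin d → ℝ)
    (hx : ∀ k i, 0 < x k i) (hxs : ∀ k, ∑ i, x k i = 1) :
    ConcaveOn ℝ {α : Fin d → ℝ | ∀ i, 0 < α i}
      (fun α => ∑ k : Fin n,
        (Real.log (Real.Gamma (∑ i, α i)) - (∑ i, Real.log (Real.Gamma (α i)))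
          + ∑ i, (α i - 1) * Real.log (x k i))) :=
  stmt_9_general x
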